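/- Let ∇ℓ : ℝ^D → ℝ^D be γ-Lipschitz and let ∇_{θ_l}ℓ denote its l-th block of coordinates. Let θ¹,…,θ^t be any (possibly random, square-integrable) points in ℝ^D and let β_l ∈ (0,1). Then E[ ‖ ((1−β_l)/(1−β_l^t)) Σ_{i=1}^{t} β_l^{t−i} ∇_{θ_l}ℓ(θ^i) − ∇_{θ_l}ℓ(θ^t) ‖² ] ≤ Σ_{i=1}^{t−1} a_{l,t,i} E[ ‖θ^{i+1} − θ^i‖² ], where a_{l,t,i} = (γ² β_l^{t−i}/(1−β_l^t)) ( t − i + β_l/(1−β_l) ). -/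

import Mathlib

open MeasureTheory Finset

section Helpers

private lemma weighted_sq_sum_le' {ι : Type*} (s : Finset ι) (w a : ι → ℝ)
    (hw : ∀ i ∈ s, 0 ≤ w i) (hw1 : ∑ i ∈ s, w i = 1) :
    (∑ i ∈ s, w i * a i) ^ 2 ≤ ∑ i ∈ s, w i * a i ^ 2 := by
  have h := Finset.sum_mul_sq_le_sq_mul_sq s (fun i => Real.sqrt (w i))
    (fun i => Real.sqrt (w i) * a i)
  have e1 : ∑ i ∈ s, Real.sqrt (w i) * (Real.sqrt (w i) * a i) = ∑ i ∈ s, w i * a i :=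
    Finset.sum_congr rfl fun i hi => by rw [← mul_assoc, Real.mul_self_sqrt (hw i hi)]
  have e2 : ∑ i ∈ s, Real.sqrt (w i) ^ 2 = 1 := by
    rw [← hw1]; exact Finset.sum_congr rfl fun i hi => Real.sq_sqrt (hw i hi)
  have e3 : ∑ i ∈ s, (Real.sqrt (w i) * a i) ^ 2 = ∑ i ∈ s, w i * a i ^ 2 :=
    Finset.sum_congr rfl fun i hi => by rw [mul_pow, Real.sq_sqrt (hw i hi)]
  rw [e1, e2, e3, one_mul] at h
  exact h

private lemma sq_sum_le_card_mul' {ι : Type*} (s : Finset ι) (a : ι → ℝ) :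
    (∑ i ∈ s, a i) ^ 2 ≤ (s.card : ℝ) * ∑ i ∈ s, a i ^ 2 := by
  have h := Finset.sum_mul_sq_le_sq_mul_sq s (fun _ => (1:ℝ)) a
  simpa using h

private lemma norm_sub_le_telescope' {E : Type*} [NormedAddCommGroup E] (x : ℕ → E) (i : ℕ) :
    ∀ t, i ≤ t → ‖x i - x t‖ ≤ ∑ j ∈ Finset.Ico i t, ‖x (j+1) - x j‖ := by
  intro t
  induction t with
  | zero => intro h; simp [Nat.le_zero.mp h]
  | succ n ih =>
    intro h
    rcases Nat.lt_or_ge i (n+1) with h' | h'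
    · have hin : i ≤ n := Nat.lt_succ_iff.mp h'
      rw [Finset.sum_Ico_succ_top hin]
      calc ‖x i - x (n+1)‖ ≤ ‖x i - x n‖ + ‖x n - x (n+1)‖ :=
            norm_sub_le_norm_sub_add_norm_sub _ _ _
        _ ≤ (∑ j ∈ Finset.Ico i n, ‖x (j+1) - x j‖) + ‖x (n+1) - x n‖ := by
            rw [norm_sub_rev (x n)]; exact add_le_add_left (ih hin) _
    · have : i = n + 1 := le_antisymm h h'
      simp [this]

private lemma sum_pow_eq' (b : ℝ) : ∀ t : ℕ,
    ∑ i ∈ Finset.Icc 1 t, b ^ (t - i) = ∑ k ∈ Finset.range t, b ^ k := by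
  intro t
  induction t with
  | zero => simp
  | succ n ih =>
    rw [Finset.sum_Icc_succ_top (by omega : 1 ≤ n + 1), geom_sum_succ']
    have : ∑ i ∈ Finset.Icc 1 n, b ^ (n + 1 - i) = b * ∑ i ∈ Finset.Icc 1 n, b ^ (n - i) := by
      rw [Finset.mul_sum]
      refine Finset.sum_congr rfl fun i hi => ?_
      rw [Finset.mem_Icc] at hi
      rw [show n + 1 - i = (n - i) + 1 by omega, pow_succ, mul_comm]
    rw [this, ih]
    simp only [Nat.sub_self, pow_zero]
    rw [← geom_sum_succ, geom_sum_succ']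

private lemma coeff_bound' (b : ℝ) (hb0 : 0 < b) (hb1 : b < 1) (t : ℕ) :
    ∀ j : ℕ, j < t →
    (1 - b) * ∑ i ∈ Finset.Icc 1 j, b ^ (t - i) * ((t:ℝ) - i) ≤
      b ^ (t - j) * ((t:ℝ) - j + b / (1 - b)) := by
  have hb' : (0:ℝ) < 1 - b := by linarith
  intro j
  induction j with
  | zero =>
    intro hj
    rw [show Finset.Icc 1 0 = (∅ : Finset ℕ) by simp, Finset.sum_empty, mul_zero]
    apply mul_nonneg (pow_nonneg hb0.le _)
    have h2 := div_nonneg hb0.le hb'.le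
    have h3 : (0:ℝ) ≤ (t:ℝ) := Nat.cast_nonneg t
    push_cast
    linarith
  | succ j ih =>
    intro hj
    have hjt : j < t := by omega
    rw [Finset.sum_Icc_succ_top (by omega : 1 ≤ j + 1), mul_add]
    have hpow : b ^ (t - j) = b ^ (t - (j+1)) * b := by
      rw [← pow_succ]; congr 1; omega
    have key : b ^ (t - (j+1)) * b * ((t:ℝ) - j + b/(1-b))
        + (1-b) * (b ^ (t - (j+1)) * ((t:ℝ) - ((j:ℝ)+1)))
        = b ^ (t-(j+1)) * ((t:ℝ) - ((j:ℝ)+1) + b/(1-b)) := by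
      field_simp
      ring
    calc (1-b) * (∑ i ∈ Finset.Icc 1 j, b ^ (t - i) * ((t:ℝ) - i))
          + (1-b) * (b ^ (t - (j+1)) * ((t:ℝ) - ((j+1 : ℕ) : ℝ)))
        ≤ b ^ (t - j) * ((t:ℝ) - j + b/(1-b))
          + (1-b) * (b ^ (t - (j+1)) * ((t:ℝ) - ((j+1 : ℕ) : ℝ))) :=
          add_le_add_left (ih hjt) _
      _ = b ^ (t-(j+1)) * ((t:ℝ) - ((j+1:ℕ):ℝ) + b/(1-b)) := by
          rw [hpow]; push_cast; linarith [key]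

end Helpers

/-- The `l`-th block of coordinates of a vector in `ℝ^D`, under the block assignment `blk`
(coordinates outside block `l` are set to zero, so its norm is the norm of the sub-vector). -/
noncomputable def blockMask {D L : ℕ} (blk : Fin D → Fin L) (l : Fin L)
    (v : EuclideanSpace ℝ (Fin D)) : EuclideanSpace ℝ (Fin D) :=
  WithLp.toLp 2 (fun i => if blk i = l then v i else 0)

private lemma blockMask_sub' {D L : ℕ} (blk : Fin D → Fin L) (l : Fin L)
    (x y : EuclideanSpace ℝ (Fin D)) :
    blockMask blk l x - blockMask blk l y = blockMask blk l (x - y) := by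
  ext i
  simp only [blockMask, PiLp.sub_apply, PiLp.toLp_apply]
  split <;> simp

private lemma norm_blockMask_le' {D L : ℕ} (blk : Fin D → Fin L) (l : Fin L)
    (v : EuclideanSpace ℝ (Fin D)) : ‖blockMask blk l v‖ ≤ ‖v‖ := by
  rw [EuclideanSpace.norm_eq, EuclideanSpace.norm_eq]
  apply Real.sqrt_le_sqrt
  apply Finset.sum_le_sum
  intro i _
  simp only [blockMask, PiLp.toLp_apply]
  split
  · exact le_rfl
  · rw [norm_zero, zero_pow two_ne_zero]; positivity

/-- Bias bound for exponentially weighted gradient averages (paper's Lemma A.2).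
If `∇ℓ : ℝ^D → ℝ^D` is `γ`-Lipschitz, `∇_{θ_l}ℓ` denotes its `l`-th block of coordinates,
`θ¹,…,θ^t` are (possibly random, square-integrable) points and `β_l ∈ (0,1)`, then
`E‖((1−β_l)/(1−β_l^t)) Σ_{i=1}^t β_l^{t−i} ∇_{θ_l}ℓ(θ^i) − ∇_{θ_l}ℓ(θ^t)‖²
  ≤ Σ_{i=1}^{t−1} a_{l,t,i} E‖θ^{i+1} − θ^i‖²`,
where `a_{l,t,i} = (γ² β_l^{t−i}/(1−β_l^t))(t − i + β_l/(1−β_l))`. -/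
theorem ema_gradient_bias_bound
    {Ω : Type*} {m0 : MeasurableSpace Ω} (μ : Measure Ω) [IsProbabilityMeasure μ]
    {D L : ℕ} (blk : Fin D → Fin L) (l : Fin L)
    (gradℓ : EuclideanSpace ℝ (Fin D) → EuclideanSpace ℝ (Fin D))
    (γ : ℝ) (hγ : 0 ≤ γ)
    (hlip : ∀ x y, ‖gradℓ x - gradℓ y‖ ≤ γ * ‖x - y‖)
    (t : ℕ) (ht : 1 ≤ t)
    (θ : ℕ → Ω → EuclideanSpace ℝ (Fin D))
    (hθL2 : ∀ i, MemLp (θ i) 2 μ)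
    (β : Fin L → ℝ) (hβ : β l ∈ Set.Ioo (0 : ℝ) 1) :
    (∫ ω, ‖((1 - β l) / (1 - (β l) ^ t)) •
          (∑ i ∈ Finset.Icc 1 t, (β l) ^ (t - i) • blockMask blk l (gradℓ (θ i ω)))
        - blockMask blk l (gradℓ (θ t ω))‖ ^ 2 ∂μ)
      ≤ ∑ i ∈ Finset.Icc 1 (t - 1),
          (γ ^ 2 * (β l) ^ (t - i) / (1 - (β l) ^ t)) * ((t : ℝ) - (i : ℝ) + β l / (1 - β l))
            * ∫ ω, ‖θ (i + 1) ω - θ i ω‖ ^ 2 ∂μ := by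
  obtain ⟨hb0, hb1⟩ := hβ
  set b := β l with hbdef
  have hbt : b ^ t < 1 := pow_lt_one₀ hb0.le hb1 (by omega)
  have hbt' : (0:ℝ) < 1 - b ^ t := by linarith
  have hb' : (0:ℝ) < 1 - b := by linarith
  set c : ℝ := (1 - b) / (1 - b ^ t) with hc
  have hc0 : 0 < c := div_pos hb' hbt'
  have hsum1 : ∑ i ∈ Finset.Icc 1 t, c * b ^ (t - i) = 1 := by
    rw [← Finset.mul_sum, sum_pow_eq', geom_sum_eq (by linarith : b ≠ 1)]
    rw [hc]
    have hne1 : b - 1 ≠ 0 := by linarith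
    have hne2 : (1:ℝ) - b ^ t ≠ 0 := ne_of_gt hbt'
    field_simp
    ring
  set A : ℕ → ℝ := fun j =>
    γ ^ 2 * b ^ (t - j) / (1 - b ^ t) * ((t : ℝ) - (j : ℝ) + b / (1 - b)) with hA
  -- pointwise bound
  have hpt : ∀ ω, ‖c • (∑ i ∈ Finset.Icc 1 t, b ^ (t - i) • blockMask blk l (gradℓ (θ i ω)))
        - blockMask blk l (gradℓ (θ t ω))‖ ^ 2
      ≤ ∑ j ∈ Finset.Ico 1 t, A j * ‖θ (j+1) ω - θ j ω‖ ^ 2 := by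
    intro ω
    set g : ℕ → EuclideanSpace ℝ (Fin D) := fun i => blockMask blk l (gradℓ (θ i ω)) with hg
    set d : ℕ → ℝ := fun j => ‖θ (j+1) ω - θ j ω‖ with hd
    have hX : c • (∑ i ∈ Finset.Icc 1 t, b ^ (t - i) • g i) - g t
        = ∑ i ∈ Finset.Icc 1 t, (c * b ^ (t - i)) • (g i - g t) := by
      simp_rw [smul_sub]
      rw [Finset.sum_sub_distrib, ← Finset.sum_smul, hsum1, one_smul, Finset.smul_sum]
      simp_rw [smul_smul]
    rw [hX]
    have hterm : ∀ i ∈ Finset.Icc 1 t,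
        ‖g i - g t‖ ≤ γ * ∑ j ∈ Finset.Ico i t, d j := by
      intro i hi
      rw [Finset.mem_Icc] at hi
      calc ‖g i - g t‖ = ‖blockMask blk l (gradℓ (θ i ω) - gradℓ (θ t ω))‖ := by
            rw [hg]; rw [blockMask_sub']
        _ ≤ ‖gradℓ (θ i ω) - gradℓ (θ t ω)‖ := norm_blockMask_le' _ _ _
        _ ≤ γ * ‖θ i ω - θ t ω‖ := hlip _ _
        _ ≤ γ * ∑ j ∈ Finset.Ico i t, d j := by
            apply mul_le_mul_of_nonneg_left _ hγ
            exact norm_sub_le_telescope' (fun n => θ n ω) i t hi.2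
    have h1 : ‖∑ i ∈ Finset.Icc 1 t, (c * b ^ (t - i)) • (g i - g t)‖
        ≤ ∑ i ∈ Finset.Icc 1 t, (c * b ^ (t - i)) * (γ * ∑ j ∈ Finset.Ico i t, d j) := by
      refine (norm_sum_le _ _).trans (Finset.sum_le_sum fun i hi => ?_)
      rw [norm_smul, Real.norm_eq_abs, abs_of_nonneg (by positivity)]
      exact mul_le_mul_of_nonneg_left (hterm i hi) (by positivity)
    have h2 : ‖∑ i ∈ Finset.Icc 1 t, (c * b ^ (t - i)) • (g i - g t)‖ ^ 2
        ≤ (∑ i ∈ Finset.Icc 1 t, (c * b ^ (t - i)) * (γ * ∑ j ∈ Finset.Ico i t, d j)) ^ 2 :=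
      pow_le_pow_left₀ (norm_nonneg _) h1 2
    have h3 := weighted_sq_sum_le' (Finset.Icc 1 t) (fun i => c * b ^ (t - i))
      (fun i => γ * ∑ j ∈ Finset.Ico i t, d j) (fun i _ => by positivity) hsum1
    have h4 : ∑ i ∈ Finset.Icc 1 t, (c * b ^ (t - i)) * (γ * ∑ j ∈ Finset.Ico i t, d j) ^ 2
        ≤ ∑ i ∈ Finset.Icc 1 t, (c * b ^ (t - i)) *
            (γ ^ 2 * ((t - i : ℕ) : ℝ) * ∑ j ∈ Finset.Ico i t, d j ^ 2) := by
      apply Finset.sum_le_sum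
      intro i _
      apply mul_le_mul_of_nonneg_left _ (by positivity)
      rw [mul_pow]
      have hcs := sq_sum_le_card_mul' (Finset.Ico i t) d
      rw [Nat.card_Ico] at hcs
      calc γ ^ 2 * (∑ j ∈ Finset.Ico i t, d j) ^ 2
          ≤ γ ^ 2 * (((t - i : ℕ) : ℝ) * ∑ j ∈ Finset.Ico i t, d j ^ 2) :=
            mul_le_mul_of_nonneg_left hcs (by positivity)
        _ = γ ^ 2 * ((t - i : ℕ) : ℝ) * ∑ j ∈ Finset.Ico i t, d j ^ 2 := by ring
    -- swap sums
    have hswap : ∑ i ∈ Finset.Icc 1 t, (c * b ^ (t - i)) *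
            (γ ^ 2 * ((t - i : ℕ) : ℝ) * ∑ j ∈ Finset.Ico i t, d j ^ 2)
        = ∑ j ∈ Finset.Ico 1 t, ∑ i ∈ Finset.Icc 1 j,
            (c * b ^ (t - i)) * (γ ^ 2 * ((t - i : ℕ) : ℝ)) * d j ^ 2 := by
      have h1' : ∀ i ∈ Finset.Icc 1 t, (c * b ^ (t - i)) *
            (γ ^ 2 * ((t - i : ℕ) : ℝ) * ∑ j ∈ Finset.Ico i t, d j ^ 2)
          = ∑ j ∈ Finset.Ico 1 t, (if i ≤ j then
              (c * b ^ (t - i)) * (γ ^ 2 * ((t - i : ℕ) : ℝ)) * d j ^ 2 else 0) := by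
        intro i hi
        rw [Finset.mem_Icc] at hi
        rw [← Finset.sum_filter]
        have : Finset.filter (fun j => i ≤ j) (Finset.Ico 1 t) = Finset.Ico i t := by
          ext j; simp only [Finset.mem_filter, Finset.mem_Ico]; omega
        rw [this, Finset.mul_sum, Finset.mul_sum]
        exact Finset.sum_congr rfl fun j _ => by ring
      rw [Finset.sum_congr rfl h1', Finset.sum_comm]
      refine Finset.sum_congr rfl fun j hj => ?_
      rw [Finset.mem_Ico] at hj
      rw [← Finset.sum_filter]
      congr 1
      ext i; simp only [Finset.mem_filter, Finset.mem_Icc]; omega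
    have h6 : ∀ j ∈ Finset.Ico 1 t,
        ∑ i ∈ Finset.Icc 1 j, (c * b ^ (t - i)) * (γ ^ 2 * ((t - i : ℕ) : ℝ)) * d j ^ 2
          ≤ A j * d j ^ 2 := by
      intro j hj
      rw [Finset.mem_Ico] at hj
      rw [← Finset.sum_mul]
      apply mul_le_mul_of_nonneg_right _ (by positivity)
      have heq : ∑ i ∈ Finset.Icc 1 j, (c * b ^ (t - i)) * (γ ^ 2 * ((t - i : ℕ) : ℝ))
          = γ ^ 2 / (1 - b ^ t) *
            ((1 - b) * ∑ i ∈ Finset.Icc 1 j, b ^ (t - i) * ((t:ℝ) - i)) := by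
        rw [Finset.mul_sum, Finset.mul_sum]
        refine Finset.sum_congr rfl fun i hi => ?_
        rw [Finset.mem_Icc] at hi
        rw [Nat.cast_sub (by omega : i ≤ t), hc]
        field_simp
      rw [heq, hA]
      have hcb := coeff_bound' b hb0 hb1 t j hj.2
      calc γ ^ 2 / (1 - b ^ t) *
            ((1 - b) * ∑ i ∈ Finset.Icc 1 j, b ^ (t - i) * ((t:ℝ) - i))
          ≤ γ ^ 2 / (1 - b ^ t) * (b ^ (t - j) * ((t:ℝ) - j + b / (1 - b))) :=
            mul_le_mul_of_nonneg_left hcb (by positivity)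
        _ = γ ^ 2 * b ^ (t - j) / (1 - b ^ t) * ((t:ℝ) - (j:ℝ) + b / (1 - b)) := by ring
    calc ‖∑ i ∈ Finset.Icc 1 t, (c * b ^ (t - i)) • (g i - g t)‖ ^ 2
        ≤ (∑ i ∈ Finset.Icc 1 t, (c * b ^ (t - i)) * (γ * ∑ j ∈ Finset.Ico i t, d j)) ^ 2 := h2
      _ ≤ ∑ i ∈ Finset.Icc 1 t, (c * b ^ (t - i)) * (γ * ∑ j ∈ Finset.Ico i t, d j) ^ 2 := h3
      _ ≤ ∑ i ∈ Finset.Icc 1 t, (c * b ^ (t - i)) *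
            (γ ^ 2 * ((t - i : ℕ) : ℝ) * ∑ j ∈ Finset.Ico i t, d j ^ 2) := h4
      _ = ∑ j ∈ Finset.Ico 1 t, ∑ i ∈ Finset.Icc 1 j,
            (c * b ^ (t - i)) * (γ ^ 2 * ((t - i : ℕ) : ℝ)) * d j ^ 2 := hswap
      _ ≤ ∑ j ∈ Finset.Ico 1 t, A j * d j ^ 2 := Finset.sum_le_sum h6
  -- integrate
  have hint : ∀ j : ℕ, Integrable (fun ω => ‖θ (j+1) ω - θ j ω‖ ^ 2) μ := fun j =>
    ((hθL2 (j+1)).sub (hθL2 j)).norm.integrable_sq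
  have hRHSint : Integrable (fun ω => ∑ j ∈ Finset.Ico 1 t, A j * ‖θ (j+1) ω - θ j ω‖ ^ 2) μ :=
    integrable_finset_sum _ fun j _ => (hint j).const_mul _
  have hmono := integral_mono_of_nonneg (μ := μ)
    (f := fun ω => ‖c • (∑ i ∈ Finset.Icc 1 t, b ^ (t - i) • blockMask blk l (gradℓ (θ i ω)))
        - blockMask blk l (gradℓ (θ t ω))‖ ^ 2)
    (g := fun ω => ∑ j ∈ Finset.Ico 1 t, A j * ‖θ (j+1) ω - θ j ω‖ ^ 2)
    (Filter.Eventually.of_forall fun ω => by positivity) hRHSint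
    (Filter.Eventually.of_forall hpt)
  have hIcc : Finset.Icc 1 (t - 1) = Finset.Ico 1 t := by
    ext x; simp only [Finset.mem_Icc, Finset.mem_Ico]; omega
  calc (∫ ω, ‖c • (∑ i ∈ Finset.Icc 1 t, b ^ (t - i) • blockMask blk l (gradℓ (θ i ω)))
        - blockMask blk l (gradℓ (θ t ω))‖ ^ 2 ∂μ)
      ≤ ∫ ω, ∑ j ∈ Finset.Ico 1 t, A j * ‖θ (j+1) ω - θ j ω‖ ^ 2 ∂μ := hmono
    _ = ∑ j ∈ Finset.Ico 1 t, ∫ ω, A j * ‖θ (j+1) ω - θ j ω‖ ^ 2 ∂μ :=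
        integral_finset_sum _ fun j _ => (hint j).const_mul _
    _ = ∑ j ∈ Finset.Ico 1 t, A j * ∫ ω, ‖θ (j+1) ω - θ j ω‖ ^ 2 ∂μ :=
        Finset.sum_congr rfl fun j _ => integral_const_mul _ _
    _ = ∑ i ∈ Finset.Icc 1 (t - 1),
          γ ^ 2 * b ^ (t - i) / (1 - b ^ t) * ((t : ℝ) - (i : ℝ) + b / (1 - b))
            * ∫ ω, ‖θ (i + 1) ω - θ i ω‖ ^ 2 ∂μ := by rw [hIcc]
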